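/- arXiv:1802.04537 — 2 statements merged into one kernel-verified Lean document; each statement's English description precedes it below -/
import Mathlib

section
/- Let w_1,...,w_K be i.i.d. random variables taking values in a compact interval [m, M] with 0 < m ≤ M, with mean Z, and let Ẑ = (1/K)∑_k w_k. Then |E[log Ẑ] − log Z + Var[w_1]/(2KZ²)| ≤ C/K² for a constant C depending only on m, M, and the moments of w_1. In particular E[log Ẑ] = log Z − Var[w_1]/(2KZ²) + O(1/K²). -/
open MeasureTheory ProbabilityTheory

lemma log_taylor3_aux {a y : ℝ} (ha : 0 < a) (ha1 : a ≤ 1) (hy : a ≤ y) :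
    |Real.log y - ((y-1) - (y-1)^2/2 + (y-1)^3/3)| ≤ (y-1)^4 / a := by
  set g : ℝ → ℝ := fun x => Real.log x - ((x-1) - (x-1)^2/2 + (x-1)^3/3) with hg
  have hy0 : 0 < y := lt_of_lt_of_le ha hy
  have hderiv : ∀ x : ℝ, 0 < x → HasDerivAt g (-(x-1)^3 / x) x := by
    intro x hx
    have h1 : HasDerivAt (fun t : ℝ => t - 1) 1 x := (hasDerivAt_id x).sub_const 1
    have h2 := (h1.pow 2).div_const 2
    have h3 := (h1.pow 3).div_const 3
    have hp : HasDerivAt (fun t : ℝ => (t-1) - (t-1)^2/2 + (t-1)^3/3)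
        (1 - (x-1) + (x-1)^2) x := by
      refine ((h1.sub h2).add h3).congr_deriv ?_
      push_cast
      ring
    have hlog := Real.hasDerivAt_log hx.ne'
    refine (hlog.sub hp).congr_deriv ?_
    field_simp
    ring
  set s : Set ℝ := Set.uIcc y 1 with hs
  have hsub : ∀ x ∈ s, a ≤ x := by
    intro x hx
    rcases Set.mem_uIcc.1 hx with ⟨h1, h2⟩ | ⟨h1, h2⟩
    · linarith
    · linarith
  have hCb : ∀ x ∈ s, ‖-(x-1)^3 / x‖ ≤ |y-1|^3 / a := by
    intro x hx
    have hxa := hsub x hx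
    have hx0 : 0 < x := lt_of_lt_of_le ha hxa
    have hx1 : |x - 1| ≤ |y - 1| := by
      rcases Set.mem_uIcc.1 hx with ⟨h1, h2⟩ | ⟨h1, h2⟩ <;>
        rw [abs_le] <;> constructor <;> rw [abs_sub_comm] at * <;>
        cases' abs_cases (1 - y) with h h <;> linarith [h.1, h.2]
    rw [Real.norm_eq_abs, abs_div, abs_neg, abs_pow, abs_of_pos hx0]
    exact div_le_div₀ (by positivity) (pow_le_pow_left₀ (abs_nonneg _) hx1 3) ha hxa
  have hmvt := Convex.norm_image_sub_le_of_norm_hasDerivWithin_le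
    (f := g) (f' := fun x => -(x-1)^3 / x) (s := s) (C := |y-1|^3 / a)
    (fun x hx => (hderiv x (lt_of_lt_of_le ha (hsub x hx))).hasDerivWithinAt)
    hCb (convex_uIcc y 1) Set.right_mem_uIcc Set.left_mem_uIcc
  have hg1 : g 1 = 0 := by simp [hg]
  rw [hg1, sub_zero, Real.norm_eq_abs, Real.norm_eq_abs] at hmvt
  calc |g y| ≤ |y-1|^3 / a * |y - 1| := hmvt
    _ = (y-1)^4 / a := by
        rw [div_mul_eq_mul_div, ← pow_succ, ← abs_pow]
        norm_num [abs_of_nonneg (by positivity : (0:ℝ) ≤ (y-1)^4)]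

lemma log_taylor3_Icc {m M Z x : ℝ} (hm : 0 < m) (hZ1 : m ≤ Z) (hZ2 : Z ≤ M)
    (hx1 : m ≤ x) (hx2 : x ≤ M) :
    |Real.log x - Real.log Z - ((x-Z)/Z - (x-Z)^2/(2*Z^2) + (x-Z)^3/(3*Z^3))|
      ≤ M / m^5 * (x-Z)^4 := by
  have hM : 0 < M := lt_of_lt_of_le hm (le_trans hZ1 hZ2)
  have hZ0 : 0 < Z := lt_of_lt_of_le hm hZ1
  have hx0 : 0 < x := lt_of_lt_of_le hm hx1
  have ha : (0:ℝ) < m / M := div_pos hm hM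
  have ha1 : m / M ≤ 1 := (div_le_one hM).2 (le_trans hZ1 hZ2)
  have hy : m / M ≤ x / Z := by rw [div_le_div_iff₀ hM hZ0]; nlinarith
  have key := log_taylor3_aux ha ha1 hy
  have heq : Real.log (x/Z) - ((x/Z-1) - (x/Z-1)^2/2 + (x/Z-1)^3/3)
      = Real.log x - Real.log Z - ((x-Z)/Z - (x-Z)^2/(2*Z^2) + (x-Z)^3/(3*Z^3)) := by
    rw [Real.log_div hx0.ne' hZ0.ne']
    field_simp
  rw [heq] at key
  refine key.trans ?_
  have h1 : (x/Z - 1)^4 = (x-Z)^4 / Z^4 := by field_simp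
  rw [h1, div_div]
  rw [div_le_iff₀ (by positivity)]
  have h4 : (0:ℝ) ≤ (x-Z)^4 := by positivity
  have he : M / m^5 * (x-Z)^4 * (Z^4 * (m/M)) = (x-Z)^4 * (Z^4/m^4) := by
    field_simp
  rw [he]
  have h1' : (1:ℝ) ≤ Z^4/m^4 :=
    (one_le_div (by positivity)).2 (pow_le_pow_left₀ hm.le hZ1 4)
  exact le_mul_of_one_le_right h4 h1'

set_option maxHeartbeats 1000000 in
/-- Second-order bias expansion of the log of a Monte Carlo estimator of bounded
i.i.d. variables: `E[log Ẑ_K] = log Z − Var[w₁]/(2KZ²) + O(1/K²)`. -/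
theorem log_mean_bias_expansion
    {Ω : Type*} [MeasureSpace Ω] [IsProbabilityMeasure (ℙ : Measure Ω)]
    (w : ℕ → Ω → ℝ) (m M Z : ℝ) (hm : 0 < m) (hmM : m ≤ M)
    (hbdd : ∀ k ω, w k ω ∈ Set.Icc m M)
    (hmeas : ∀ k, Measurable (w k))
    (hident : ∀ k, IdentDistrib (w k) (w 0) ℙ ℙ)
    (hindep : iIndepFun w ℙ)
    (hmean : ∫ ω, w 0 ω = Z) :
    ∃ C : ℝ, ∀ K : ℕ, 1 ≤ K →
      |(∫ ω, Real.log ((∑ k ∈ Finset.range K, w k ω) / K))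
          - Real.log Z + variance (w 0) ℙ / (2 * K * Z ^ 2)|
        ≤ C / (K : ℝ) ^ 2 := by
  have hM : 0 < M := lt_of_lt_of_le hm hmM
  -- integrability of bounded measurable functions
  have bint : ∀ (f : Ω → ℝ) (C : ℝ), Measurable f → (∀ ω, |f ω| ≤ C) →
      Integrable f ℙ := fun f C hf hC =>
    ⟨hf.aestronglyMeasurable,
      HasFiniteIntegral.of_bounded (C := C) (ae_of_all _ fun ω => by
        simpa [Real.norm_eq_abs] using hC ω)⟩
  have hwbd : ∀ k ω, |w k ω| ≤ M := fun k ω =>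
    abs_le.2 ⟨by linarith [(hbdd k ω).1], (hbdd k ω).2⟩
  have hwint : ∀ k, Integrable (w k) ℙ := fun k => bint _ M (hmeas k) (hwbd k)
  -- Z is in [m, M]
  have hwZ : ∀ k, ∫ ω, w k ω = Z := fun k => by rw [(hident k).integral_eq, hmean]
  have hmZ : m ≤ Z := by
    rw [← hmean]
    calc m = ∫ _ω : Ω, m := by simp
      _ ≤ ∫ ω, w 0 ω := integral_mono (integrable_const m) (hwint 0)
            (fun ω => (hbdd 0 ω).1)
  have hZM : Z ≤ M := by
    rw [← hmean]
    calc ∫ ω, w 0 ω ≤ ∫ _ω : Ω, M :=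
          integral_mono (hwint 0) (integrable_const M) (fun ω => (hbdd 0 ω).2)
      _ = M := by simp
  have hZ0 : 0 < Z := lt_of_lt_of_le hm hmZ
  -- centered variables
  set D : ℝ := M - m with hD
  have hD0 : 0 ≤ D := by linarith
  set X : ℕ → Ω → ℝ := fun k ω => w k ω - Z with hX
  have hXmeas : ∀ k, Measurable (X k) := fun k => (hmeas k).sub_const Z
  have hXbd : ∀ k ω, |X k ω| ≤ D := fun k ω =>
    abs_le.2 ⟨by simp only [hX]; linarith [(hbdd k ω).1], by
      simp only [hX]; linarith [(hbdd k ω).2]⟩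
  have hXint : ∀ k, Integrable (X k) ℙ := fun k => bint _ D (hXmeas k) (hXbd k)
  have hXindep : iIndepFun X ℙ :=
    hindep.comp (fun _ t => t - Z) (fun _ => measurable_id.sub_const Z)
  -- moments of X k equal moments of X 0
  have hXp : ∀ (k : ℕ) (p : ℕ), ∫ ω, (X k ω)^p = ∫ ω, (X 0 ω)^p := fun k p =>
    ((hident k).comp (u := fun t => (t - Z)^p)
      ((measurable_id.sub_const Z).pow_const p)).integral_eq
  have hX1 : ∀ k, ∫ ω, X k ω = 0 := fun k => by
    simp only [hX]
    rw [integral_sub (hwint k) (integrable_const Z), hwZ k]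
    simp
  set σ2 : ℝ := ∫ ω, (X 0 ω)^2 with hσ2
  set μ3 : ℝ := ∫ ω, (X 0 ω)^3 with hμ3
  set μ4 : ℝ := ∫ ω, (X 0 ω)^4 with hμ4
  have hσ2nn : 0 ≤ σ2 := integral_nonneg fun ω => sq_nonneg _
  have hμ4nn : 0 ≤ μ4 := integral_nonneg fun ω => by positivity
  -- partial sums
  set S : ℕ → Ω → ℝ := fun n ω => ∑ k ∈ Finset.range n, X k ω with hS
  have hSmeas : ∀ n, Measurable (S n) := fun n =>
    Finset.measurable_sum _ (fun i _ => hXmeas i)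
  have hSbd : ∀ n ω, |S n ω| ≤ n * D := fun n ω => by
    calc |S n ω| ≤ ∑ k ∈ Finset.range n, |X k ω| := Finset.abs_sum_le_sum_abs _ _
      _ ≤ ∑ _k ∈ Finset.range n, D := Finset.sum_le_sum (fun i _ => hXbd i ω)
      _ = n * D := by simp [mul_comm]
  have hSint : ∀ n p, Integrable (fun ω => (S n ω)^p) ℙ := fun n p =>
    bint _ ((n*D)^p) ((hSmeas n).pow_const p) (fun ω => by
      rw [abs_pow]
      exact pow_le_pow_left₀ (abs_nonneg _) (hSbd n ω) p)
  have hSint1 : ∀ n, Integrable (S n) ℙ := fun n => bint _ (n*D) (hSmeas n) (hSbd n)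
  have hXpint : ∀ k p, Integrable (fun ω => (X k ω)^p) ℙ := fun k p =>
    bint _ (D^p) ((hXmeas k).pow_const p) (fun ω => by
      rw [abs_pow]
      exact pow_le_pow_left₀ (abs_nonneg _) (hXbd k ω) p)
  have hSXint : ∀ n a b, Integrable (fun ω => (S n ω)^a * (X n ω)^b) ℙ := fun n a b =>
    bint _ ((n*D)^a * D^b) (((hSmeas n).pow_const a).mul ((hXmeas n).pow_const b))
      (fun ω => by
        rw [abs_mul, abs_pow, abs_pow]
        exact mul_le_mul (pow_le_pow_left₀ (abs_nonneg _) (hSbd n ω) a)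
          (pow_le_pow_left₀ (abs_nonneg _) (hXbd n ω) b) (by positivity) (by positivity))
  -- independence: E[S^a X^b] = E[S^a] E[X^b]
  have hSfun : ∀ n, S n = ∑ j ∈ Finset.range n, X j := fun n =>
    funext fun ω => by simp [hS]
  have hmulSX : ∀ n a b, ∫ ω, (S n ω)^a * (X n ω)^b
      = (∫ ω, (S n ω)^a) * (∫ ω, (X n ω)^b) := by
    intro n a b
    have hind : IndepFun (S n) (X n) ℙ := by
      rw [hSfun n]
      exact hXindep.indepFun_sum_range_succ hXmeas n
    have hind2 : IndepFun (fun ω => (S n ω)^a) (fun ω => (X n ω)^b) ℙ :=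
      hind.comp (measurable_id.pow_const a) (measurable_id.pow_const b)
    exact hind2.integral_fun_mul_eq_mul_integral (hSint n a).aestronglyMeasurable (hXpint n b).aestronglyMeasurable
  have hSsucc : ∀ n ω, S (n+1) ω = S n ω + X n ω := fun n ω =>
    Finset.sum_range_succ (fun k => X k ω) n
  -- first moment of S n
  have hS1 : ∀ n, ∫ ω, S n ω = 0 := by
    intro n
    induction n with
    | zero => simp [hS]
    | succ n ih =>
      rw [show (fun ω => S (n+1) ω) = fun ω => S n ω + X n ω from
        funext fun ω => hSsucc n ω]
      rw [integral_add (hSint1 n) (hXint n), ih, hX1 n, add_zero]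
  -- second moment of S n
  have hS2 : ∀ n, ∫ ω, (S n ω)^2 = n * σ2 := by
    intro n
    induction n with
    | zero => simp [hS]
    | succ n ih =>
      have e2 : (fun ω => (S (n+1) ω)^2)
          = fun ω => (S n ω)^2 + (2*((S n ω)^1 * (X n ω)^1) + (X n ω)^2) :=
        funext fun ω => by rw [hSsucc n ω]; ring
      have i1 : Integrable (fun ω => 2*((S n ω)^1 * (X n ω)^1)) ℙ :=
        (hSXint n 1 1).const_mul 2
      have i2 : Integrable (fun ω => 2*((S n ω)^1 * (X n ω)^1) + (X n ω)^2) ℙ :=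
        i1.add (hXpint n 2)
      rw [e2, integral_add (hSint n 2) i2, integral_add i1 (hXpint n 2),
        integral_const_mul, hmulSX n 1 1, ih, hXp n 2]
      simp only [pow_one]
      rw [hX1 n]
      push_cast
      ring
  -- third moment of S n
  have hS3 : ∀ n, ∫ ω, (S n ω)^3 = n * μ3 := by
    intro n
    induction n with
    | zero => simp [hS]
    | succ n ih =>
      have e3 : (fun ω => (S (n+1) ω)^3)
          = fun ω => (S n ω)^3 + (3*((S n ω)^2 * (X n ω)^1)
              + (3*((S n ω)^1 * (X n ω)^2) + (X n ω)^3)) :=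
        funext fun ω => by rw [hSsucc n ω]; ring
      have i1 : Integrable (fun ω => 3*((S n ω)^2 * (X n ω)^1)) ℙ :=
        (hSXint n 2 1).const_mul 3
      have i2 : Integrable (fun ω => 3*((S n ω)^1 * (X n ω)^2)) ℙ :=
        (hSXint n 1 2).const_mul 3
      have i3 : Integrable (fun ω => 3*((S n ω)^1 * (X n ω)^2) + (X n ω)^3) ℙ :=
        i2.add (hXpint n 3)
      have i4 : Integrable (fun ω => 3*((S n ω)^2 * (X n ω)^1)
          + (3*((S n ω)^1 * (X n ω)^2) + (X n ω)^3)) ℙ := i1.add i3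
      rw [e3, integral_add (hSint n 3) i4, integral_add i1 i3,
        integral_add i2 (hXpint n 3),
        integral_const_mul, integral_const_mul, hmulSX n 2 1, hmulSX n 1 2,
        ih, hXp n 3]
      simp only [pow_one]
      rw [hX1 n, hS1 n]
      push_cast
      ring
  -- fourth moment of S n
  have hS4 : ∀ n, ∫ ω, (S n ω)^4 = n * μ4 + 3 * n * (n - 1) * σ2^2 := by
    intro n
    induction n with
    | zero => simp [hS]
    | succ n ih =>
      have e4 : (fun ω => (S (n+1) ω)^4)
          = fun ω => (S n ω)^4 + (4*((S n ω)^3 * (X n ω)^1)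
              + (6*((S n ω)^2 * (X n ω)^2)
              + (4*((S n ω)^1 * (X n ω)^3) + (X n ω)^4))) :=
        funext fun ω => by rw [hSsucc n ω]; ring
      have i1 : Integrable (fun ω => 4*((S n ω)^3 * (X n ω)^1)) ℙ :=
        (hSXint n 3 1).const_mul 4
      have i2 : Integrable (fun ω => 6*((S n ω)^2 * (X n ω)^2)) ℙ :=
        (hSXint n 2 2).const_mul 6
      have i3 : Integrable (fun ω => 4*((S n ω)^1 * (X n ω)^3)) ℙ :=
        (hSXint n 1 3).const_mul 4
      have i4 : Integrable (fun ω => 4*((S n ω)^1 * (X n ω)^3) + (X n ω)^4) ℙ :=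
        i3.add (hXpint n 4)
      have i5 : Integrable (fun ω => 6*((S n ω)^2 * (X n ω)^2)
          + (4*((S n ω)^1 * (X n ω)^3) + (X n ω)^4)) ℙ := i2.add i4
      have i6 : Integrable (fun ω => 4*((S n ω)^3 * (X n ω)^1)
          + (6*((S n ω)^2 * (X n ω)^2)
          + (4*((S n ω)^1 * (X n ω)^3) + (X n ω)^4))) ℙ := i1.add i5
      rw [e4, integral_add (hSint n 4) i6, integral_add i1 i5,
        integral_add i2 i4, integral_add i3 (hXpint n 4),
        integral_const_mul, integral_const_mul, integral_const_mul,
        hmulSX n 3 1, hmulSX n 2 2, hmulSX n 1 3,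
        ih, hXp n 4, hXp n 2, hS2 n]
      simp only [pow_one]
      rw [hX1 n, hS1 n]
      push_cast
      ring
  -- variance identity
  have hw2 : MemLp (w 0) 2 ℙ := MemLp.of_bound (hmeas 0).aestronglyMeasurable M
    (ae_of_all _ fun ω => by simpa [Real.norm_eq_abs] using hwbd 0 ω)
  have hvar : variance (w 0) ℙ = σ2 := by
    rw [variance_eq_integral hw2.aemeasurable]
    simp only [hmean]
    rfl
  -- the constant
  set C4 : ℝ := M / m^5 with hC4
  have hC4nn : 0 ≤ C4 := by positivity
  set B : ℝ := μ4 + 3 * σ2^2 with hB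
  have hBnn : 0 ≤ B := by positivity
  refine ⟨C4 * B + |μ3| / (3 * m^3), ?_⟩
  intro K hK
  have hN : (0:ℝ) < K := by exact_mod_cast hK
  have hN1 : (1:ℝ) ≤ K := by exact_mod_cast hK
  set Zh : Ω → ℝ := fun ω => (∑ k ∈ Finset.range K, w k ω) / K with hZh
  have hZhmeas : Measurable Zh :=
    (Finset.measurable_sum _ fun i _ => hmeas i).div_const _
  have hsumw : ∀ ω, ∑ k ∈ Finset.range K, w k ω = S K ω + K * Z := by
    intro ω
    have : S K ω = (∑ k ∈ Finset.range K, w k ω) - K * Z := by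
      simp [hS, hX, Finset.sum_sub_distrib, mul_comm]
    linarith
  have hT : ∀ ω, Zh ω - Z = S K ω / K := by
    intro ω
    rw [hZh]
    simp only
    rw [hsumw ω]
    field_simp
    ring
  have hZhmem : ∀ ω, m ≤ Zh ω ∧ Zh ω ≤ M := by
    intro ω
    constructor
    · rw [hZh]
      simp only
      rw [le_div_iff₀ hN]
      calc m * K = (Finset.range K).card • m := by
            simp [Finset.card_range, nsmul_eq_mul, mul_comm]
        _ ≤ ∑ k ∈ Finset.range K, w k ω :=
            Finset.card_nsmul_le_sum _ _ _ (fun i _ => (hbdd i ω).1)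
    · rw [hZh]
      simp only
      rw [div_le_iff₀ hN]
      calc ∑ k ∈ Finset.range K, w k ω ≤ (Finset.range K).card • M :=
            Finset.sum_le_card_nsmul _ _ _ (fun i _ => (hbdd i ω).2)
        _ = M * K := by simp [Finset.card_range, nsmul_eq_mul, mul_comm]
  -- powers of the deviation
  have hTp : ∀ p : ℕ, (fun ω => (Zh ω - Z)^p) = fun ω => (S K ω)^p / (K:ℝ)^p :=
    fun p => funext fun ω => by rw [hT ω, div_pow]
  have hTint : ∀ p : ℕ, Integrable (fun ω => (Zh ω - Z)^p) ℙ := fun p => by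
    rw [hTp p]; exact (hSint K p).div_const _
  have hTval : ∀ p : ℕ, ∫ ω, (Zh ω - Z)^p = (∫ ω, (S K ω)^p) / (K:ℝ)^p := fun p => by
    rw [hTp p]; exact integral_div _ _
  have hTint1 : Integrable (fun ω => Zh ω - Z) ℙ := by
    have := hTint 1; simpa using this
  have hTval1 : ∫ ω, (Zh ω - Z) = 0 := by
    have h := hTval 1
    simp only [pow_one] at h
    rw [h, hS1 K, zero_div]
  -- remainder function
  set P : Ω → ℝ := fun ω => (Zh ω - Z)/Z - (Zh ω - Z)^2/(2*Z^2) + (Zh ω - Z)^3/(3*Z^3)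
    with hP
  set R : Ω → ℝ := fun ω => Real.log (Zh ω) - Real.log Z - P ω with hR
  have iP1 : Integrable (fun ω => (Zh ω - Z)/Z - (Zh ω - Z)^2/(2*Z^2)) ℙ :=
    (hTint1.div_const Z).sub ((hTint 2).div_const _)
  have hPint : Integrable P ℙ := iP1.add ((hTint 3).div_const _)
  have hPval : ∫ ω, P ω = - σ2 / (2 * K * Z^2) + μ3 / (3 * (K:ℝ)^2 * Z^3) := by
    rw [hP]
    simp only
    have iA : Integrable (fun ω => (Zh ω - Z)/Z) ℙ := hTint1.div_const Z
    have iB : Integrable (fun ω => (Zh ω - Z)^2/(2*Z^2)) ℙ := (hTint 2).div_const _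
    rw [integral_add iP1 ((hTint 3).div_const _),
      integral_sub iA iB,
      integral_div, integral_div, integral_div, hTval1, hTval 2, hTval 3,
      hS2 K, hS3 K]
    field_simp
    ring
  have hlogbd : ∀ ω, |Real.log (Zh ω)| ≤ |Real.log m| + |Real.log M| := by
    intro ω
    have h1 : Real.log m ≤ Real.log (Zh ω) := Real.log_le_log hm (hZhmem ω).1
    have h2 : Real.log (Zh ω) ≤ Real.log M :=
      Real.log_le_log (lt_of_lt_of_le hm (hZhmem ω).1) (hZhmem ω).2
    rw [abs_le]
    constructor
    · have := neg_abs_le (Real.log m); have := abs_nonneg (Real.log M); linarith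
    · have := le_abs_self (Real.log M); have := abs_nonneg (Real.log m); linarith
  have hlogint : Integrable (fun ω => Real.log (Zh ω)) ℙ :=
    bint _ _ (Real.measurable_log.comp hZhmeas) hlogbd
  have hRint : Integrable R ℙ := by
    have iD : Integrable (fun ω => Real.log (Zh ω) - Real.log Z) ℙ :=
      hlogint.sub (integrable_const _)
    exact iD.sub hPint
  -- bound on the remainder
  have hRbd : ∀ ω, |R ω| ≤ C4 * (Zh ω - Z)^4 := fun ω =>
    log_taylor3_Icc hm hmZ hZM (hZhmem ω).1 (hZhmem ω).2
  have hRval : |∫ ω, R ω| ≤ C4 * B / (K:ℝ)^2 := by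
    have h1 : |∫ ω, R ω| ≤ ∫ ω, |R ω| := by
      simpa [Real.norm_eq_abs] using norm_integral_le_integral_norm (f := R) (μ := ℙ)
    have h2 : ∫ ω, |R ω| ≤ ∫ ω, C4 * (Zh ω - Z)^4 :=
      integral_mono hRint.abs ((hTint 4).const_mul C4) hRbd
    have h3 : ∫ ω, C4 * (Zh ω - Z)^4 = C4 * ((∫ ω, (S K ω)^4) / (K:ℝ)^4) := by
      rw [integral_const_mul, hTval 4]
    have h4 : (∫ ω, (S K ω)^4) / (K:ℝ)^4 ≤ B / (K:ℝ)^2 := by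
      rw [hS4 K, div_le_div_iff₀ (by positivity) (by positivity), hB]
      have h34 : (K:ℝ)^3 ≤ (K:ℝ)^4 := pow_le_pow_right₀ hN1 (by norm_num)
      nlinarith [mul_le_mul_of_nonneg_left h34 hμ4nn,
        mul_le_mul_of_nonneg_left h34 (by positivity : (0:ℝ) ≤ 3*σ2^2),
        mul_pos (mul_pos hN hN) hN]
    calc |∫ ω, R ω| ≤ ∫ ω, C4 * (Zh ω - Z)^4 := h1.trans h2
      _ = C4 * ((∫ ω, (S K ω)^4) / (K:ℝ)^4) := h3
      _ ≤ C4 * (B / (K:ℝ)^2) := mul_le_mul_of_nonneg_left h4 hC4nn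
      _ = C4 * B / (K:ℝ)^2 := by ring
  -- assemble
  have hlogdecomp : ∫ ω, Real.log (Zh ω) = (∫ ω, R ω) + Real.log Z + ∫ ω, P ω := by
    have : (fun ω => Real.log (Zh ω)) = fun ω => R ω + (Real.log Z + P ω) :=
      funext fun ω => by rw [hR]; simp only; ring
    have iC : Integrable (fun ω => Real.log Z + P ω) ℙ := (integrable_const _).add hPint
    rw [this, integral_add hRint iC,
      integral_add (integrable_const _) hPint, integral_const]
    simp [measure_univ]
    ring
  have hgoal : (∫ ω, Real.log ((∑ k ∈ Finset.range K, w k ω) / K))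
      - Real.log Z + variance (w 0) ℙ / (2 * K * Z ^ 2)
      = (∫ ω, R ω) + μ3 / (3 * (K:ℝ)^2 * Z^3) := by
    have hint_eq : (∫ ω, Real.log ((∑ k ∈ Finset.range K, w k ω) / K))
        = ∫ ω, Real.log (Zh ω) := rfl
    rw [hint_eq, hvar, hlogdecomp, hPval]
    field_simp
    ring
  rw [hgoal]
  have hμ3b : |μ3 / (3 * (K:ℝ)^2 * Z^3)| ≤ |μ3| / (3 * m^3) / (K:ℝ)^2 := by
    rw [abs_div, abs_of_pos (by positivity : (0:ℝ) < 3 * (K:ℝ)^2 * Z^3), div_div]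
    apply div_le_div_of_nonneg_left (abs_nonneg _) (by positivity)
    have hZ3 : m^3 ≤ Z^3 := pow_le_pow_left₀ hm.le hmZ 3
    nlinarith
  calc |(∫ ω, R ω) + μ3 / (3 * (K:ℝ)^2 * Z^3)|
      ≤ |∫ ω, R ω| + |μ3 / (3 * (K:ℝ)^2 * Z^3)| := abs_add_le _ _
    _ ≤ C4 * B / (K:ℝ)^2 + |μ3| / (3 * m^3) / (K:ℝ)^2 := add_le_add hRval hμ3b
    _ = (C4 * B + |μ3| / (3 * m^3)) / (K:ℝ)^2 := by ring
end

section
/- Let w_1,...,w_K be i.i.d. random variables taking values in a compact interval [m, M] with 0 < m ≤ M, with mean Z and Var[w_1] > 0, and let Ẑ = (1/K)∑_k w_k. Then |Var[log Ẑ] − Var[w_1]/(K Z²)| ≤ C/K² for a constant C depending only on m, M, and the moments of w_1. -/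
open MeasureTheory ProbabilityTheory

lemma log_taylor_bound {m z x : ℝ} (hm : 0 < m) (hz : m ≤ z) (hx : m ≤ x) :
    |Real.log x - Real.log z - (x - z)/z + (x-z)^2/(2*z^2)|
      ≤ |x - z|^3 / m^3 := by
  have hz0 : (0:ℝ) < z := lt_of_lt_of_le hm hz
  have hx0 : (0:ℝ) < x := lt_of_lt_of_le hm hx
  set f : ℝ → ℝ := fun t => Real.log t - (t - z)/z + (t-z)^2/(2*z^2) with hf
  set f' : ℝ → ℝ := fun t => 1/t - 1/z + (t-z)/z^2 with hf'
  set s : Set ℝ := Set.Icc (min z x) (max z x) with hs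
  have hms : ∀ t ∈ s, m ≤ t := by
    rintro t ⟨h1, _⟩
    exact le_trans (le_min hz hx) h1
  have hderiv : ∀ t ∈ s, HasDerivWithinAt f (f' t) s t := by
    intro t ht
    have ht0 : t ≠ 0 := ne_of_gt (lt_of_lt_of_le hm (hms t ht))
    have h1 : HasDerivAt f (1/t - 1/z + ((2:ℕ) * (t - z)^(2-1) * 1)/(2*z^2)) t := by
      have hlog := Real.hasDerivAt_log ht0
      have h2 : HasDerivAt (fun t : ℝ => (t - z)/z) (1/z) t := by
        simpa using (((hasDerivAt_id t).sub_const z).div_const z)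
      have h3 : HasDerivAt (fun t : ℝ => (t-z)^2/(2*z^2))
          (((2:ℕ) * (t - z)^(2-1) * 1)/(2*z^2)) t :=
        (((hasDerivAt_id t).sub_const z).pow 2).div_const (2*z^2)
      exact ((hlog.sub h2).add h3).congr_deriv (by ring)
    have : (1/t - 1/z + ((2:ℕ) * (t - z)^(2-1) * 1)/(2*z^2)) = f' t := by
      simp [hf']; ring
    rw [this] at h1
    exact h1.hasDerivWithinAt
  have hbound : ∀ t ∈ s, ‖f' t‖ ≤ (x - z)^2 / m^3 := by
    intro t ht
    have htm := hms t ht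
    have ht0 : (0:ℝ) < t := lt_of_lt_of_le hm htm
    have hval : f' t = (t - z)^2 / (t * z^2) := by
      simp only [hf']
      field_simp
      ring
    rw [hval, Real.norm_eq_abs, abs_div, abs_of_nonneg (sq_nonneg _),
      abs_of_pos (by positivity : (0:ℝ) < t * z^2)]
    have htz : |t - z| ≤ |x - z| := by
      have hub : t ≤ z + |x - z| :=
        le_trans ht.2 (sup_le (by linarith [abs_nonneg (x-z)]) (by linarith [le_abs_self (x-z)]))
      have hlb : z - |x - z| ≤ t :=
        le_trans (le_inf (by linarith [abs_nonneg (x-z)]) (by linarith [neg_abs_le (x-z)])) ht.1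
      exact abs_le.2 ⟨by linarith, by linarith⟩
    have h1 : (t - z)^2 ≤ (x - z)^2 := by
      rw [← sq_abs (t-z), ← sq_abs (x-z)]
      exact pow_le_pow_left₀ (abs_nonneg _) htz 2
    have h2 : m^3 ≤ t * z^2 := by
      have hz2 : m^2 ≤ z^2 := by nlinarith
      nlinarith
    exact div_le_div₀ (sq_nonneg _) h1 (by positivity) h2
  have hconv : Convex ℝ s := convex_Icc _ _
  have hzx : z ∈ s := ⟨min_le_left _ _, le_max_left _ _⟩
  have hxx : x ∈ s := ⟨min_le_right _ _, le_max_right _ _⟩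
  have := hconv.norm_image_sub_le_of_norm_hasDerivWithin_le hderiv hbound hzx hxx
  have hfz : f z = Real.log z := by simp [hf]
  have key : ‖f x - f z‖ ≤ (x - z)^2/m^3 * ‖x - z‖ := this
  rw [hfz, Real.norm_eq_abs, Real.norm_eq_abs] at key
  calc |Real.log x - Real.log z - (x - z)/z + (x-z)^2/(2*z^2)|
      = |f x - Real.log z| := by congr 1; simp only [hf]; ring
    _ ≤ (x - z)^2/m^3 * |x - z| := key
    _ = |x - z|^3/m^3 := by
        rw [← sq_abs (x - z)]
        ring

open MeasureTheory ProbabilityTheory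

lemma bdd_integrable {Ω : Type*} [MeasureSpace Ω] [IsProbabilityMeasure (ℙ : Measure Ω)]
    {f : Ω → ℝ} {c : ℝ} (hf : Measurable f) (hb : ∀ ω, |f ω| ≤ c) : Integrable f ℙ :=
  (integrable_const c).mono' hf.aestronglyMeasurable
    (ae_of_all _ (by simpa [Real.norm_eq_abs] using hb))

lemma sum_pow_moments {Ω : Type*} [MeasureSpace Ω] [IsProbabilityMeasure (ℙ : Measure Ω)]
    (X : ℕ → Ω → ℝ) (b s2 m3 m4 : ℝ) (hb : 0 ≤ b)
    (hXm : ∀ k, Measurable (X k)) (hXb : ∀ k ω, |X k ω| ≤ b)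
    (hind : iIndepFun X ℙ)
    (h1 : ∀ k, ∫ ω, X k ω = 0)
    (h2 : ∀ k, ∫ ω, (X k ω)^2 = s2)
    (h3 : ∀ k, ∫ ω, (X k ω)^3 = m3)
    (h4 : ∀ k, ∫ ω, (X k ω)^4 = m4) (K : ℕ) :
    (∫ ω, (∑ k ∈ Finset.range K, X k ω) = 0) ∧
    (∫ ω, (∑ k ∈ Finset.range K, X k ω)^2 = K * s2) ∧
    (∫ ω, (∑ k ∈ Finset.range K, X k ω)^3 = K * m3) ∧
    (∫ ω, (∑ k ∈ Finset.range K, X k ω)^4 = K * m4 + 3*((K:ℝ)^2 - K) * s2^2) := by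
  have hintX : ∀ k (n : ℕ), Integrable (fun ω => (X k ω)^n) ℙ := fun k n =>
    bdd_integrable ((hXm k).pow_const n)
      (fun ω => by rw [abs_pow]; exact pow_le_pow_left₀ (abs_nonneg _) (hXb k ω) n)
  induction K with
  | zero => norm_num
  | succ K ih =>
    obtain ⟨ih1, ih2, ih3, ih4⟩ := ih
    have hTm : Measurable (fun ω => ∑ k ∈ Finset.range K, X k ω) :=
      Finset.measurable_sum _ (fun k _ => hXm k)
    have hTb : ∀ ω, |∑ k ∈ Finset.range K, X k ω| ≤ K * b := by
      intro ω
      calc |∑ k ∈ Finset.range K, X k ω| ≤ ∑ k ∈ Finset.range K, |X k ω| :=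
            Finset.abs_sum_le_sum_abs _ _
        _ ≤ ∑ _k ∈ Finset.range K, b := Finset.sum_le_sum (fun k _ => hXb k ω)
        _ = K * b := by simp [mul_comm]
    have hintT : ∀ n : ℕ, Integrable (fun ω => (∑ k ∈ Finset.range K, X k ω)^n) ℙ := fun n =>
      bdd_integrable (hTm.pow_const n)
        (fun ω => by rw [abs_pow]; exact pow_le_pow_left₀ (abs_nonneg _) (hTb ω) n)
    have hintP : ∀ n l : ℕ,
        Integrable (fun ω => (∑ k ∈ Finset.range K, X k ω)^n * (X K ω)^l) ℙ := by
      intro n l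
      refine bdd_integrable (c := ((K:ℝ)*b)^n * b^l)
        ((hTm.pow_const n).mul ((hXm K).pow_const l)) (fun ω => ?_)
      rw [abs_mul, abs_pow, abs_pow]
      exact mul_le_mul (pow_le_pow_left₀ (abs_nonneg _) (hTb ω) n)
        (pow_le_pow_left₀ (abs_nonneg _) (hXb K ω) l) (by positivity) (by positivity)
    have hTX : IndepFun (fun ω => ∑ k ∈ Finset.range K, X k ω) (X K) ℙ := by
      have h := hind.indepFun_finset_sum_of_notMem hXm (Finset.notMem_range_self (n := K))
      have he : (∑ j ∈ Finset.range K, X j) = fun ω => ∑ k ∈ Finset.range K, X k ω := by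
        funext ω; simp
      rwa [he] at h
    have key : ∀ n l : ℕ, ∫ ω, (∑ k ∈ Finset.range K, X k ω)^n * (X K ω)^l
        = (∫ ω, (∑ k ∈ Finset.range K, X k ω)^n) * (∫ ω, (X K ω)^l) := by
      intro n l
      have h := (hTX.comp (measurable_id.pow_const n) (measurable_id.pow_const l)
        ).integral_mul_eq_mul_integral (hintT n).aestronglyMeasurable (hintX K l).aestronglyMeasurable
      simpa [Function.comp] using h
    have expand : ∀ n : ℕ, ∫ ω, (∑ k ∈ Finset.range K, X k ω + X K ω)^n
        = ∑ j ∈ Finset.range (n+1), (∫ ω, (∑ k ∈ Finset.range K, X k ω)^j)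
            * (∫ ω, (X K ω)^(n-j)) * (n.choose j) := by
      intro n
      have hrw : (fun ω => (∑ k ∈ Finset.range K, X k ω + X K ω)^n)
          = fun ω => ∑ j ∈ Finset.range (n+1),
              ((∑ k ∈ Finset.range K, X k ω)^j * (X K ω)^(n-j)) * (n.choose j) := by
        funext ω; rw [add_pow]
      rw [hrw, integral_finset_sum _ (fun j _ => (hintP j (n-j)).mul_const _)]
      refine Finset.sum_congr rfl fun j _ => ?_
      rw [integral_mul_const, key]
    simp only [Finset.sum_range_succ]
    refine ⟨?_, ?_, ?_, ?_⟩
    · have := expand 1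
      simp [Finset.sum_range_succ, ih1, h1 K] at this
      simpa using this
    · rw [expand 2]
      simp [Finset.sum_range_succ, ih1, ih2, h1 K, h2 K]
      push_cast; ring
    · rw [expand 3]
      simp [Finset.sum_range_succ, ih1, ih2, ih3, h1 K, h2 K, h3 K]
      push_cast; ring
    · rw [expand 4]
      simp [Finset.sum_range_succ, ih1, ih2, ih3, ih4, h1 K, h2 K, h3 K, h4 K, Nat.choose]
      push_cast; ring

set_option maxHeartbeats 1000000 in
/-- Leading-order variance of the log of a Monte Carlo estimator of bounded i.i.d.
variables: `Var[log Ẑ_K] = Var[w₁]/(KZ²) + O(1/K²)`. -/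
theorem log_mean_variance_expansion
    {Ω : Type*} [MeasureSpace Ω] [IsProbabilityMeasure (ℙ : Measure Ω)]
    (w : ℕ → Ω → ℝ) (m M Z : ℝ) (hm : 0 < m) (hmM : m ≤ M)
    (hbdd : ∀ k ω, w k ω ∈ Set.Icc m M)
    (hmeas : ∀ k, Measurable (w k))
    (hident : ∀ k, IdentDistrib (w k) (w 0) ℙ ℙ)
    (hindep : iIndepFun w ℙ)
    (hmean : ∫ ω, w 0 ω = Z)
    (hvar : 0 < variance (w 0) ℙ) :
    ∃ C : ℝ, ∀ K : ℕ, 1 ≤ K →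
      |variance (fun ω => Real.log ((∑ k ∈ Finset.range K, w k ω) / K)) ℙ
          - variance (w 0) ℙ / (K * Z ^ 2)|
        ≤ C / (K : ℝ) ^ 2 := by
  have hM0 : 0 < M := lt_of_lt_of_le hm hmM
  have hwb : ∀ k ω, |w k ω| ≤ M := fun k ω =>
    abs_le.2 ⟨by linarith [(hbdd k ω).1], (hbdd k ω).2⟩
  have hwint : ∀ k, Integrable (w k) ℙ := fun k => bdd_integrable (hmeas k) (hwb k)
  have hZm : m ≤ Z := by
    rw [← hmean]
    calc m = ∫ _ω : Ω, m ∂ℙ := by simp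
      _ ≤ ∫ ω, w 0 ω := integral_mono (integrable_const m) (hwint 0) (fun ω => (hbdd 0 ω).1)
  have hZM : Z ≤ M := by
    rw [← hmean]
    calc (∫ ω, w 0 ω) ≤ ∫ _ω : Ω, M ∂ℙ :=
          integral_mono (hwint 0) (integrable_const M) (fun ω => (hbdd 0 ω).2)
      _ = M := by simp
  have hZ0 : 0 < Z := lt_of_lt_of_le hm hZm
  set b : ℝ := M - m with hbdef
  have hb0 : 0 ≤ b := by simp [hbdef]; linarith
  set X : ℕ → Ω → ℝ := fun k ω => w k ω - Z with hXdef
  have hXm : ∀ k, Measurable (X k) := fun k => (hmeas k).sub measurable_const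
  have hXb : ∀ k ω, |X k ω| ≤ b := fun k ω =>
    abs_le.2 ⟨by simp [hXdef, hbdef]; linarith [(hbdd k ω).1],
      by simp [hXdef, hbdef]; linarith [(hbdd k ω).2]⟩
  have hXind : iIndepFun X ℙ :=
    hindep.comp (fun _ x => x - Z) (fun _ => measurable_id.sub measurable_const)
  have hXident : ∀ k, IdentDistrib (X k) (X 0) ℙ ℙ := fun k =>
    (hident k).comp (measurable_id.sub measurable_const)
  have hXint : ∀ k (n : ℕ), Integrable (fun ω => (X k ω)^n) ℙ := fun k n =>
    bdd_integrable ((hXm k).pow_const n)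
      (fun ω => by rw [abs_pow]; exact pow_le_pow_left₀ (abs_nonneg _) (hXb k ω) n)
  have hmeanX : ∀ k, ∫ ω, X k ω = 0 := by
    intro k
    have hwk : ∫ ω, w k ω = Z := by rw [(hident k).integral_eq, hmean]
    simp only [hXdef]
    rw [integral_sub (hwint k) (integrable_const Z), hwk]
    simp
  have hmomeq : ∀ (n : ℕ) k, ∫ ω, (X k ω)^n = ∫ ω, (X 0 ω)^n := fun n k =>
    ((hXident k).comp (measurable_id.pow_const n)).integral_eq
  set s2 : ℝ := ∫ ω, (X 0 ω)^2 with hs2def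
  set m3 : ℝ := ∫ ω, (X 0 ω)^3 with hm3def
  set m4 : ℝ := ∫ ω, (X 0 ω)^4 with hm4def
  have hs20 : 0 ≤ s2 := integral_nonneg (fun ω => sq_nonneg _)
  have hs2b : s2 ≤ b^2 := by
    rw [hs2def]
    calc (∫ ω, (X 0 ω)^2) ≤ ∫ _ω : Ω, b^2 ∂ℙ := by
          refine integral_mono (hXint 0 2) (integrable_const _) (fun ω => ?_)
          rw [← sq_abs]
          exact pow_le_pow_left₀ (abs_nonneg _) (hXb 0 ω) 2
      _ = b^2 := by simp
  have hm3b : |m3| ≤ b^3 := by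
    rw [hm3def]
    calc |∫ ω, (X 0 ω)^3| ≤ ∫ ω, |X 0 ω|^3 := by
          have h := norm_integral_le_integral_norm (μ := (ℙ : Measure Ω)) (fun ω => (X 0 ω)^3)
          simp only [Real.norm_eq_abs, abs_pow] at h
          exact h
      _ ≤ ∫ _ω : Ω, b^3 ∂ℙ := by
          refine integral_mono ?_ (integrable_const _) (fun ω => ?_)
          · have := (hXint 0 3).abs
            simpa [abs_pow] using this
          · exact pow_le_pow_left₀ (abs_nonneg _) (hXb 0 ω) 3
      _ = b^3 := by simp
  have hm4b : m4 ≤ b^4 := by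
    rw [hm4def]
    calc (∫ ω, (X 0 ω)^4) ≤ ∫ _ω : Ω, b^4 ∂ℙ := by
          refine integral_mono (hXint 0 4) (integrable_const _) (fun ω => ?_)
          have h4 : (X 0 ω)^4 = |X 0 ω|^4 := by
            rw [← abs_pow, abs_of_nonneg (by positivity)]
          rw [h4]
          exact pow_le_pow_left₀ (abs_nonneg _) (hXb 0 ω) 4
      _ = b^4 := by simp
  -- variance of w 0 equals s2
  have hvar_eq : variance (w 0) ℙ = s2 := by
    have hmem : MemLp (w 0) 2 ℙ :=
      (memLp_top_of_bound (hmeas 0).aestronglyMeasurable M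
        (ae_of_all _ fun ω => by simpa [Real.norm_eq_abs] using hwb 0 ω)).mono_exponent
        le_top
    rw [variance_eq_sub hmem, hmean, hs2def]
    have hexp : (fun ω => (X 0 ω)^2) = fun ω => (w 0 ω)^2 - (2*Z) * w 0 ω + Z^2 := by
      funext ω; simp only [hXdef]; ring
    have hw2int : Integrable (fun ω => (w 0 ω)^2) ℙ :=
      bdd_integrable ((hmeas 0).pow_const 2)
        (fun ω => by rw [abs_pow]; exact pow_le_pow_left₀ (abs_nonneg _) (hwb 0 ω) 2)
    have hint1 : Integrable (fun ω => (w 0 ω)^2 - 2*Z*w 0 ω) ℙ := by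
      exact hw2int.sub ((hwint 0).const_mul _)
    rw [hexp, integral_add hint1 (integrable_const _),
      integral_sub hw2int ((hwint 0).const_mul _), integral_const_mul, hmean,
      integral_const]
    simp [Pi.pow_apply]
    ring
  have hmom := fun K => sum_pow_moments X b s2 m3 m4 hb0 hXm hXb hXind hmeanX
    (fun k => hmomeq 2 k) (fun k => hmomeq 3 k) (fun k => hmomeq 4 k) K
  refine ⟨b^3/m^3 + 9*b^4/m^4 + 4*b^5/m^5 + 4*b^6/m^6 + (b^2/(2*m^2) + b^3/m^3)^2, ?_⟩
  intro K hK
  have hK1 : (1:ℝ) ≤ K := by exact_mod_cast hK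
  have hK0 : (0:ℝ) < K := lt_of_lt_of_le one_pos hK1
  have hKne : (K:ℝ) ≠ 0 := ne_of_gt hK0
  have hmne : m ≠ 0 := ne_of_gt hm
  have hZne : Z ≠ 0 := ne_of_gt hZ0
  rw [hvar_eq]
  set T : Ω → ℝ := fun ω => ∑ k ∈ Finset.range K, X k ω with hTdef
  have hTm : Measurable T := Finset.measurable_sum _ (fun k _ => hXm k)
  have hTb : ∀ ω, |T ω| ≤ K * b := by
    intro ω
    calc |T ω| ≤ ∑ k ∈ Finset.range K, |X k ω| := Finset.abs_sum_le_sum_abs _ _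
      _ ≤ ∑ _k ∈ Finset.range K, b := Finset.sum_le_sum (fun k _ => hXb k ω)
      _ = K * b := by simp [mul_comm]
  have hTint : ∀ n : ℕ, Integrable (fun ω => (T ω)^n) ℙ := fun n =>
    bdd_integrable (hTm.pow_const n)
      (fun ω => by rw [abs_pow]; exact pow_le_pow_left₀ (abs_nonneg _) (hTb ω) n)
  have hT1 : ∫ ω, T ω = 0 := (hmom K).1
  have hT2 : ∫ ω, (T ω)^2 = (K:ℝ) * s2 := (hmom K).2.1
  have hT3 : ∫ ω, (T ω)^3 = (K:ℝ) * m3 := (hmom K).2.2.1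
  have hT4eq : ∫ ω, (T ω)^4 = (K:ℝ) * m4 + 3*((K:ℝ)^2 - K) * s2^2 := (hmom K).2.2.2
  have hs2sq : s2^2 ≤ b^4 := by nlinarith
  have hT4 : ∫ ω, (T ω)^4 ≤ 4*(K:ℝ)^2*b^4 := by
    rw [hT4eq]
    have hb4 : (0:ℝ) ≤ b^4 := by positivity
    nlinarith [hK1, hK0, hm4b, hs2sq, sq_nonneg ((K:ℝ) - 1)]
  have habs4 : ∀ ω, |T ω|^4 = (T ω)^4 := fun ω => by
    rw [← abs_pow, abs_of_nonneg (by positivity)]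
  -- the empirical mean
  have hSval : ∀ ω, (∑ k ∈ Finset.range K, w k ω)/(K:ℝ) = Z + T ω/K := by
    intro ω
    have hsum : T ω = (∑ k ∈ Finset.range K, w k ω) - K*Z := by
      simp only [hTdef, hXdef, Finset.sum_sub_distrib, Finset.sum_const,
        Finset.card_range, nsmul_eq_mul]
    rw [hsum]; field_simp; ring
  have hSm : ∀ ω, m ≤ Z + T ω/K := by
    intro ω
    rw [← hSval ω, le_div_iff₀ hK0]
    calc m * K = ∑ _k ∈ Finset.range K, m := by simp [mul_comm]
      _ ≤ ∑ k ∈ Finset.range K, w k ω := Finset.sum_le_sum (fun k _ => (hbdd k ω).1)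
  have hSM : ∀ ω, Z + T ω/K ≤ M := by
    intro ω
    rw [← hSval ω, div_le_iff₀ hK0]
    calc (∑ k ∈ Finset.range K, w k ω) ≤ ∑ _k ∈ Finset.range K, M :=
          Finset.sum_le_sum (fun k _ => (hbdd k ω).2)
      _ = M * K := by simp [mul_comm]
  -- the three pieces
  set L : Ω → ℝ := fun ω => T ω/((K:ℝ)*Z) with hLdef
  set Q : Ω → ℝ := fun ω => -(T ω)^2/(2*(K:ℝ)^2*Z^2) with hQdef
  set R : Ω → ℝ := fun ω => Real.log (Z + T ω/K) - Real.log Z - L ω - Q ω with hRdef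
  have hLm : Measurable L := hTm.div_const _
  have hQm : Measurable Q := ((hTm.pow_const 2).neg).div_const _
  have hRm : Measurable R :=
    (((measurable_const.add (hTm.div_const _)).log.sub measurable_const).sub hLm).sub hQm
  have hLb : ∀ ω, |L ω| ≤ b/m := by
    intro ω
    have : |L ω| = |T ω|/((K:ℝ)*Z) := by
      rw [hLdef]; simp only []
      rw [abs_div, abs_of_pos (show (0:ℝ) < (K:ℝ)*Z by positivity)]
    rw [this]
    calc |T ω|/((K:ℝ)*Z) ≤ (K*b)/((K:ℝ)*m) := by
          apply div_le_div₀ (by positivity) (hTb ω) (by positivity)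
          exact mul_le_mul_of_nonneg_left hZm (le_of_lt hK0)
      _ = b/m := mul_div_mul_left _ _ hKne
  have hQb : ∀ ω, |Q ω| ≤ b^2/(2*m^2) := by
    intro ω
    have : |Q ω| = (T ω)^2/(2*(K:ℝ)^2*Z^2) := by
      rw [hQdef]; simp only []
      rw [abs_div, abs_neg, abs_of_nonneg (sq_nonneg (T ω)),
        abs_of_pos (show (0:ℝ) < 2*(K:ℝ)^2*Z^2 by positivity)]
    rw [this]
    calc (T ω)^2/(2*(K:ℝ)^2*Z^2) ≤ ((K:ℝ)*b)^2/(2*(K:ℝ)^2*m^2) := by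
          have h1 : (T ω)^2 ≤ ((K:ℝ)*b)^2 := by
            rw [← sq_abs (T ω)]
            exact pow_le_pow_left₀ (abs_nonneg _) (hTb ω) 2
          have h2 : 2*(K:ℝ)^2*m^2 ≤ 2*(K:ℝ)^2*Z^2 := by
            have hmz : m^2 ≤ Z^2 := pow_le_pow_left₀ (le_of_lt hm) hZm 2
            linarith [mul_le_mul_of_nonneg_left hmz (sq_nonneg (K:ℝ))]
          exact div_le_div₀ (by positivity) h1 (by positivity) h2
      _ = b^2/(2*m^2) := by field_simp
  have hRb : ∀ ω, |R ω| ≤ |T ω|^3/((K:ℝ)^3*m^3) := by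
    intro ω
    have h := log_taylor_bound hm hZm (hSm ω)
    have hxz : Z + T ω/K - Z = T ω/K := by ring
    rw [hxz] at h
    have heq : Real.log (Z + T ω/K) - Real.log Z - (T ω/K)/Z + (T ω/K)^2/(2*Z^2) = R ω := by
      simp only [hRdef, hLdef, hQdef]
      field_simp
      ring
    rw [heq] at h
    have habs : |T ω/K|^3 = |T ω|^3/(K:ℝ)^3 := by
      rw [abs_div, abs_of_pos hK0, div_pow]
    rw [habs] at h
    calc |R ω| ≤ |T ω|^3/(K:ℝ)^3/m^3 := h
      _ = |T ω|^3/((K:ℝ)^3*m^3) := by ring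
  have hRb' : ∀ ω, |R ω| ≤ b^3/m^3 := by
    intro ω
    refine le_trans (hRb ω) ?_
    calc |T ω|^3/((K:ℝ)^3*m^3) ≤ ((K:ℝ)*b)^3/((K:ℝ)^3*m^3) :=
          div_le_div₀ (by positivity) (pow_le_pow_left₀ (abs_nonneg _) (hTb ω) 3)
            (by positivity) le_rfl
      _ = b^3/m^3 := by field_simp
  -- integrability of the pieces and their products
  have hLint : Integrable L ℙ := bdd_integrable hLm hLb
  have hQint : Integrable Q ℙ := bdd_integrable hQm hQb
  have hRint : Integrable R ℙ := bdd_integrable hRm hRb'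
  have hmulint : ∀ (f h : Ω → ℝ) (cf ch : ℝ), Measurable f → Measurable h →
      (∀ ω, |f ω| ≤ cf) → (∀ ω, |h ω| ≤ ch) → Integrable (fun ω => f ω * h ω) ℙ := by
    intro f h cf ch hfm hhm hfb hhb
    refine bdd_integrable (hfm.mul hhm) (c := cf * ch) (fun ω => ?_)
    rw [abs_mul]
    exact mul_le_mul (hfb ω) (hhb ω) (abs_nonneg _) (le_trans (abs_nonneg _) (hfb ω))
  have hLQint : Integrable (fun ω => L ω * Q ω) ℙ := hmulint _ _ _ _ hLm hQm hLb hQb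
  have hLRint : Integrable (fun ω => L ω * R ω) ℙ := hmulint _ _ _ _ hLm hRm hLb hRb'
  have hQRint : Integrable (fun ω => Q ω * R ω) ℙ := hmulint _ _ _ _ hQm hRm hQb hRb'
  have hL2int : Integrable (fun ω => (L ω)^2) ℙ := by
    have := hmulint _ _ _ _ hLm hLm hLb hLb
    simpa [← sq] using this
  have hQ2int : Integrable (fun ω => (Q ω)^2) ℙ := by
    have := hmulint _ _ _ _ hQm hQm hQb hQb
    simpa [← sq] using this
  have hR2int : Integrable (fun ω => (R ω)^2) ℙ := by
    have := hmulint _ _ _ _ hRm hRm hRb' hRb'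
    simpa [← sq] using this
  -- the log of the empirical mean
  set g : Ω → ℝ := fun ω => Real.log ((∑ k ∈ Finset.range K, w k ω)/(K:ℝ)) with hgdef
  have hgm : Measurable g :=
    ((Finset.measurable_sum _ (fun k _ => hmeas k)).div_const _).log
  have hgb : ∀ ω, |g ω| ≤ |Real.log m| + |Real.log M| := by
    intro ω
    have hgval : g ω = Real.log (Z + T ω/K) := by rw [hgdef]; simp only []; rw [hSval ω]
    have h1 : Real.log m ≤ g ω := by
      rw [hgval]; exact Real.log_le_log hm (hSm ω)
    have h2 : g ω ≤ Real.log M := by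
      rw [hgval]
      exact Real.log_le_log (lt_of_lt_of_le hm (hSm ω)) (hSM ω)
    exact abs_le.2 ⟨by linarith [neg_abs_le (Real.log m), abs_nonneg (Real.log M)],
      by linarith [le_abs_self (Real.log M), abs_nonneg (Real.log m)]⟩
  have hgmem : MemLp g 2 ℙ :=
    (memLp_top_of_bound hgm.aestronglyMeasurable _
      (ae_of_all _ fun ω => by simpa [Real.norm_eq_abs] using hgb ω)).mono_exponent le_top
  -- decomposition g = log Z + F
  set F : Ω → ℝ := fun ω => L ω + Q ω + R ω with hFdef
  have hdecomp : ∀ ω, g ω = Real.log Z + F ω := by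
    intro ω
    rw [hgdef]; simp only []
    rw [hSval ω]
    simp only [hFdef, hRdef]
    ring
  have hFm : Measurable F := (hLm.add hQm).add hRm
  have hFb : ∀ ω, |F ω| ≤ b/m + b^2/(2*m^2) + b^3/m^3 := by
    intro ω
    calc |F ω| ≤ |L ω + Q ω| + |R ω| := abs_add_le _ _
      _ ≤ (|L ω| + |Q ω|) + |R ω| := by linarith [abs_add_le (L ω) (Q ω)]
      _ ≤ b/m + b^2/(2*m^2) + b^3/m^3 := by linarith [hLb ω, hQb ω, hRb' ω]
  have hFint : Integrable F ℙ := bdd_integrable hFm hFb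
  have hF2int : Integrable (fun ω => (F ω)^2) ℙ := by
    have := hmulint _ _ _ _ hFm hFm hFb hFb
    simpa [← sq] using this
  -- variance of g in terms of F
  have hVg : variance g ℙ = (∫ ω, (F ω)^2) - (∫ ω, F ω)^2 := by
    rw [variance_eq_sub hgmem]
    have e0 : ℙ[g^2] = ∫ ω, (g ω)^2 := by simp [Pi.pow_apply]
    have e1 : ∫ ω, (g ω)^2 = (Real.log Z)^2 + (2*Real.log Z*(∫ ω, F ω) + ∫ ω, (F ω)^2) := by
      have hrw : (fun ω => (g ω)^2)
          = fun ω => (Real.log Z)^2 + (2*Real.log Z * F ω + (F ω)^2) := by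
        funext ω; rw [hdecomp ω]; ring
      have i1 : Integrable (fun ω => 2*Real.log Z * F ω) ℙ := by
        exact hFint.const_mul _
      have i2 : Integrable (fun ω => 2*Real.log Z * F ω + (F ω)^2) ℙ := by
        exact i1.add hF2int
      rw [hrw, integral_add (integrable_const _) i2,
        integral_add i1 hF2int, integral_const, integral_const_mul]
      simp
    have e2 : ∫ ω, g ω = Real.log Z + ∫ ω, F ω := by
      have hrw : (fun ω => g ω) = fun ω => Real.log Z + F ω := funext hdecomp
      rw [hrw, integral_add (integrable_const _) hFint, integral_const]
      simp
    rw [e0, e1, e2]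
    ring
  -- integral values
  have hLval : ∫ ω, L ω = 0 := by
    have hrw : (fun ω => L ω) = fun ω => T ω * (1/((K:ℝ)*Z)) := by
      funext ω; simp only [hLdef]; ring
    rw [hrw, integral_mul_const, hT1, zero_mul]
  have hL2 : ∫ ω, (L ω)^2 = s2/((K:ℝ)*Z^2) := by
    have hrw : (fun ω => (L ω)^2) = fun ω => (T ω)^2 * (1/((K:ℝ)*Z)^2) := by
      funext ω; simp only [hLdef]; ring
    rw [hrw, integral_mul_const, hT2]
    field_simp
  have hLQ : ∫ ω, L ω * Q ω = -(m3/(2*(K:ℝ)^2*Z^3)) := by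
    have hrw : (fun ω => L ω * Q ω) = fun ω => (T ω)^3 * (-(1/(2*(K:ℝ)^3*Z^3))) := by
      funext ω; simp only [hLdef, hQdef]; ring
    rw [hrw, integral_mul_const, hT3]
    field_simp
  have heQ : ∫ ω, Q ω = -(s2/(2*(K:ℝ)*Z^2)) := by
    have hrw : (fun ω => Q ω) = fun ω => (T ω)^2 * (-(1/(2*(K:ℝ)^2*Z^2))) := by
      funext ω; simp only [hQdef]; ring
    rw [hrw, integral_mul_const, hT2]
    field_simp
  -- generic bounding helpers
  have habsint : ∀ (f h : Ω → ℝ), Integrable f ℙ → Integrable h ℙ →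
      (∀ ω, |f ω| ≤ h ω) → |∫ ω, f ω| ≤ ∫ ω, h ω := by
    intro f h hf hh hfh
    have h1 : |∫ ω, f ω| ≤ ∫ ω, |f ω| := by
      have := norm_integral_le_integral_norm (μ := (ℙ : Measure Ω)) f
      simpa [Real.norm_eq_abs] using this
    exact h1.trans (integral_mono hf.abs hh hfh)
  have hT4c : ∀ c : ℝ, 0 ≤ c → ∫ ω, (T ω)^4 * c ≤ 4*(K:ℝ)^2*b^4*c := by
    intro c hc; rw [integral_mul_const]; exact mul_le_mul_of_nonneg_right hT4 hc
  have hT2c : ∀ c : ℝ, 0 ≤ c → ∫ ω, (T ω)^2 * c ≤ (K:ℝ)*b^2*c := by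
    intro c hc; rw [integral_mul_const, hT2]
    exact mul_le_mul_of_nonneg_right (mul_le_mul_of_nonneg_left hs2b hK0.le) hc
  have hZ2 : m^2 ≤ Z^2 := pow_le_pow_left₀ hm.le hZm 2
  have hZ3 : m^3 ≤ Z^3 := pow_le_pow_left₀ hm.le hZm 3
  have hZ4 : m^4 ≤ Z^4 := pow_le_pow_left₀ hm.le hZm 4
  -- bounds on the cross terms
  have hLQb : |∫ ω, L ω * Q ω| ≤ b^3/(2*(K:ℝ)^2*m^3) := by
    rw [hLQ, abs_neg, abs_div, abs_of_pos (show (0:ℝ) < 2*(K:ℝ)^2*Z^3 by positivity)]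
    exact div_le_div₀ (by positivity) hm3b (by positivity)
      (by linarith [mul_le_mul_of_nonneg_left hZ3 (sq_nonneg (K:ℝ))])
  have hLRb : |∫ ω, L ω * R ω| ≤ 4*b^4/((K:ℝ)^2*m^4) := by
    have hdom : ∀ ω, |L ω * R ω| ≤ (T ω)^4 * (1/((K:ℝ)^4*m^4)) := by
      intro ω
      have h1 : |L ω| ≤ |T ω|/((K:ℝ)*m) := by
        have he : |L ω| = |T ω|/((K:ℝ)*Z) := by
          rw [hLdef]; simp only []
          rw [abs_div, abs_of_pos (show (0:ℝ) < (K:ℝ)*Z by positivity)]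
        rw [he]
        exact div_le_div₀ (abs_nonneg _) le_rfl (by positivity)
          (mul_le_mul_of_nonneg_left hZm hK0.le)
      calc |L ω * R ω| = |L ω| * |R ω| := abs_mul _ _
        _ ≤ (|T ω|/((K:ℝ)*m)) * (|T ω|^3/((K:ℝ)^3*m^3)) :=
            mul_le_mul h1 (hRb ω) (abs_nonneg _) (by positivity)
        _ = |T ω|^4 * (1/((K:ℝ)^4*m^4)) := by field_simp
        _ = (T ω)^4 * (1/((K:ℝ)^4*m^4)) := by rw [habs4]
    calc |∫ ω, L ω * R ω| ≤ ∫ ω, (T ω)^4 * (1/((K:ℝ)^4*m^4)) :=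
          habsint _ _ hLRint ((hTint 4).mul_const _) hdom
      _ ≤ 4*(K:ℝ)^2*b^4*(1/((K:ℝ)^4*m^4)) := hT4c _ (by positivity)
      _ = 4*b^4/((K:ℝ)^2*m^4) := by field_simp
  have hQabs : ∀ ω, |Q ω| ≤ |T ω|^2/(2*(K:ℝ)^2*m^2) := by
    intro ω
    have he : |Q ω| = (T ω)^2/(2*(K:ℝ)^2*Z^2) := by
      rw [hQdef]; simp only []
      rw [abs_div, abs_neg, abs_of_nonneg (sq_nonneg (T ω)),
        abs_of_pos (show (0:ℝ) < 2*(K:ℝ)^2*Z^2 by positivity)]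
    rw [he, ← sq_abs (T ω)]
    exact div_le_div₀ (by positivity) le_rfl (by positivity)
      (by linarith [mul_le_mul_of_nonneg_left hZ2 (sq_nonneg (K:ℝ))])
  have hQRb : |∫ ω, Q ω * R ω| ≤ 2*b^5/((K:ℝ)^2*m^5) := by
    have hdom : ∀ ω, |Q ω * R ω| ≤ (T ω)^4 * (b/(2*(K:ℝ)^4*m^5)) := by
      intro ω
      calc |Q ω * R ω| = |Q ω| * |R ω| := abs_mul _ _
        _ ≤ (|T ω|^2/(2*(K:ℝ)^2*m^2)) * (|T ω|^3/((K:ℝ)^3*m^3)) :=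
            mul_le_mul (hQabs ω) (hRb ω) (abs_nonneg _) (by positivity)
        _ = |T ω|^5 * (1/(2*(K:ℝ)^5*m^5)) := by
            field_simp
        _ ≤ ((K:ℝ)*b) * |T ω|^4 * (1/(2*(K:ℝ)^5*m^5)) := by
            have h5 : |T ω|^5 ≤ ((K:ℝ)*b) * |T ω|^4 := by
              calc |T ω|^5 = |T ω| * |T ω|^4 := by ring
                _ ≤ ((K:ℝ)*b) * |T ω|^4 :=
                    mul_le_mul_of_nonneg_right (hTb ω) (by positivity)
            exact mul_le_mul_of_nonneg_right h5 (by positivity)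
        _ = |T ω|^4 * (b/(2*(K:ℝ)^4*m^5)) := by field_simp
        _ = (T ω)^4 * (b/(2*(K:ℝ)^4*m^5)) := by rw [habs4]
    calc |∫ ω, Q ω * R ω| ≤ ∫ ω, (T ω)^4 * (b/(2*(K:ℝ)^4*m^5)) :=
          habsint _ _ hQRint ((hTint 4).mul_const _) hdom
      _ ≤ 4*(K:ℝ)^2*b^4*(b/(2*(K:ℝ)^4*m^5)) := hT4c _ (by positivity)
      _ = 2*b^5/((K:ℝ)^2*m^5) := by field_simp; ring
  have hQ2b : ∫ ω, (Q ω)^2 ≤ b^4/((K:ℝ)^2*m^4) := by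
    have hrw : (fun ω => (Q ω)^2) = fun ω => (T ω)^4 * (1/(4*(K:ℝ)^4*Z^4)) := by
      funext ω; simp only [hQdef]; ring
    rw [hrw]
    calc ∫ ω, (T ω)^4 * (1/(4*(K:ℝ)^4*Z^4)) ≤ 4*(K:ℝ)^2*b^4*(1/(4*(K:ℝ)^4*Z^4)) :=
          hT4c _ (by positivity)
      _ = b^4/((K:ℝ)^2*Z^4) := by field_simp
      _ ≤ b^4/((K:ℝ)^2*m^4) := div_le_div₀ (by positivity) le_rfl (by positivity)
          (mul_le_mul_of_nonneg_left hZ4 (sq_nonneg (K:ℝ)))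
  have hR2b : ∫ ω, (R ω)^2 ≤ 4*b^6/((K:ℝ)^2*m^6) := by
    have hdom : ∀ ω, (R ω)^2 ≤ (T ω)^4 * (b^2/((K:ℝ)^4*m^6)) := by
      intro ω
      calc (R ω)^2 = |R ω|^2 := (sq_abs _).symm
        _ ≤ (|T ω|^3/((K:ℝ)^3*m^3))^2 := pow_le_pow_left₀ (abs_nonneg _) (hRb ω) 2
        _ = |T ω|^6 * (1/((K:ℝ)^6*m^6)) := by field_simp
        _ ≤ ((K:ℝ)*b)^2 * |T ω|^4 * (1/((K:ℝ)^6*m^6)) := by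
            have h6 : |T ω|^6 ≤ ((K:ℝ)*b)^2 * |T ω|^4 := by
              calc |T ω|^6 = |T ω|^2 * |T ω|^4 := by ring
                _ ≤ ((K:ℝ)*b)^2 * |T ω|^4 := by
                    refine mul_le_mul_of_nonneg_right ?_ (by positivity)
                    exact pow_le_pow_left₀ (abs_nonneg _) (hTb ω) 2
            exact mul_le_mul_of_nonneg_right h6 (by positivity)
        _ = |T ω|^4 * (b^2/((K:ℝ)^4*m^6)) := by field_simp
        _ = (T ω)^4 * (b^2/((K:ℝ)^4*m^6)) := by rw [habs4]
    calc ∫ ω, (R ω)^2 ≤ ∫ ω, (T ω)^4 * (b^2/((K:ℝ)^4*m^6)) :=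
          integral_mono hR2int ((hTint 4).mul_const _) hdom
      _ ≤ 4*(K:ℝ)^2*b^4*(b^2/((K:ℝ)^4*m^6)) := hT4c _ (by positivity)
      _ = 4*b^6/((K:ℝ)^2*m^6) := by field_simp
  have heQb : |∫ ω, Q ω| ≤ b^2/(2*(K:ℝ)*m^2) := by
    rw [heQ, abs_neg, abs_of_nonneg (div_nonneg hs20 (by positivity))]
    exact div_le_div₀ (by positivity) hs2b (by positivity)
      (by linarith [mul_le_mul_of_nonneg_left hZ2 hK0.le])
  have heRb : |∫ ω, R ω| ≤ b^3/((K:ℝ)*m^3) := by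
    have hdom : ∀ ω, |R ω| ≤ (T ω)^2 * (b/((K:ℝ)^2*m^3)) := by
      intro ω
      calc |R ω| ≤ |T ω|^3/((K:ℝ)^3*m^3) := hRb ω
        _ = |T ω| * |T ω|^2 * (1/((K:ℝ)^3*m^3)) := by
            field_simp
        _ ≤ ((K:ℝ)*b) * |T ω|^2 * (1/((K:ℝ)^3*m^3)) := by
            refine mul_le_mul_of_nonneg_right
              (mul_le_mul_of_nonneg_right (hTb ω) (by positivity)) (by positivity)
        _ = |T ω|^2 * (b/((K:ℝ)^2*m^3)) := by field_simp
        _ = (T ω)^2 * (b/((K:ℝ)^2*m^3)) := by rw [sq_abs]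
    calc |∫ ω, R ω| ≤ ∫ ω, (T ω)^2 * (b/((K:ℝ)^2*m^3)) :=
          habsint _ _ hRint ((hTint 2).mul_const _) hdom
      _ ≤ (K:ℝ)*b^2*(b/((K:ℝ)^2*m^3)) := hT2c _ (by positivity)
      _ = b^3/((K:ℝ)*m^3) := by field_simp
  -- expansion of the square integral of F
  have hFe : ∫ ω, F ω = (∫ ω, Q ω) + (∫ ω, R ω) := by
    have hrw : (fun ω => F ω) = fun ω => L ω + (Q ω + R ω) := by
      funext ω; simp only [hFdef]; ring
    have i3 : Integrable (fun ω => Q ω + R ω) ℙ := by exact hQint.add hRint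
    rw [hrw, integral_add hLint i3, integral_add hQint hRint, hLval, zero_add]
  have hF2e : ∫ ω, (F ω)^2 = (∫ ω, (L ω)^2) + ((∫ ω, (Q ω)^2) + ((∫ ω, (R ω)^2)
      + (2*(∫ ω, L ω*Q ω) + (2*(∫ ω, L ω*R ω) + 2*(∫ ω, Q ω*R ω))))) := by
    have hrw : (fun ω => (F ω)^2) = fun ω => (L ω)^2 + ((Q ω)^2 + ((R ω)^2
        + (2*(L ω*Q ω) + (2*(L ω*R ω) + 2*(Q ω*R ω))))) := by
      funext ω; simp only [hFdef]; ring
    have i1 : Integrable (fun ω => 2*(L ω*R ω) + 2*(Q ω*R ω)) ℙ := by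
      exact (hLRint.const_mul 2).add (hQRint.const_mul 2)
    have i2 : Integrable (fun ω => 2*(L ω*Q ω) + (2*(L ω*R ω) + 2*(Q ω*R ω))) ℙ := by
      exact (hLQint.const_mul 2).add i1
    have i3 : Integrable (fun ω => (R ω)^2 + (2*(L ω*Q ω) + (2*(L ω*R ω) + 2*(Q ω*R ω)))) ℙ := by
      exact hR2int.add i2
    have i4 : Integrable (fun ω => (Q ω)^2 + ((R ω)^2
        + (2*(L ω*Q ω) + (2*(L ω*R ω) + 2*(Q ω*R ω))))) ℙ := by
      exact hQ2int.add i3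
    rw [hrw, integral_add hL2int i4, integral_add hQ2int i3, integral_add hR2int i2,
      integral_add (hLQint.const_mul 2) i1,
      integral_add (hLRint.const_mul 2) (hQRint.const_mul 2),
      integral_const_mul, integral_const_mul, integral_const_mul]
  have hkey : variance g ℙ - s2/((K:ℝ)*Z^2)
      = 2*(∫ ω, L ω*Q ω) + 2*(∫ ω, L ω*R ω) + 2*(∫ ω, Q ω*R ω)
        + (∫ ω, (Q ω)^2) + (∫ ω, (R ω)^2) - ((∫ ω, Q ω) + (∫ ω, R ω))^2 := by
    rw [hVg, hF2e, hFe, hL2]; ring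
  have hQ2nn : 0 ≤ ∫ ω, (Q ω)^2 := integral_nonneg (fun ω => sq_nonneg _)
  have hR2nn : 0 ≤ ∫ ω, (R ω)^2 := integral_nonneg (fun ω => sq_nonneg _)
  have hsq : ((∫ ω, Q ω) + (∫ ω, R ω))^2 ≤ (b^2/(2*m^2) + b^3/m^3)^2/(K:ℝ)^2 := by
    have h1 : |(∫ ω, Q ω) + (∫ ω, R ω)| ≤ (b^2/(2*m^2) + b^3/m^3)/K := by
      calc |(∫ ω, Q ω) + (∫ ω, R ω)| ≤ |∫ ω, Q ω| + |∫ ω, R ω| := abs_add_le _ _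
        _ ≤ b^2/(2*(K:ℝ)*m^2) + b^3/((K:ℝ)*m^3) := add_le_add heQb heRb
        _ = (b^2/(2*m^2) + b^3/m^3)/K := by field_simp
    calc ((∫ ω, Q ω) + (∫ ω, R ω))^2 = |(∫ ω, Q ω) + (∫ ω, R ω)|^2 := (sq_abs _).symm
      _ ≤ ((b^2/(2*m^2) + b^3/m^3)/K)^2 := pow_le_pow_left₀ (abs_nonneg _) h1 2
      _ = (b^2/(2*m^2) + b^3/m^3)^2/(K:ℝ)^2 := by rw [div_pow]
  rw [hkey]
  obtain ⟨e1l, e1u⟩ := abs_le.1 hLQb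
  obtain ⟨e2l, e2u⟩ := abs_le.1 hLRb
  obtain ⟨e3l, e3u⟩ := abs_le.1 hQRb
  have hsqnn : 0 ≤ ((∫ ω, Q ω) + (∫ ω, R ω))^2 := sq_nonneg _
  have htotal : |2*(∫ ω, L ω*Q ω) + 2*(∫ ω, L ω*R ω) + 2*(∫ ω, Q ω*R ω)
      + (∫ ω, (Q ω)^2) + (∫ ω, (R ω)^2) - ((∫ ω, Q ω) + (∫ ω, R ω))^2|
      ≤ 2*(b^3/(2*(K:ℝ)^2*m^3)) + 2*(4*b^4/((K:ℝ)^2*m^4)) + 2*(2*b^5/((K:ℝ)^2*m^5))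
        + b^4/((K:ℝ)^2*m^4) + 4*b^6/((K:ℝ)^2*m^6)
        + (b^2/(2*m^2) + b^3/m^3)^2/(K:ℝ)^2 :=
    abs_le.2 ⟨by linarith [hQ2b, hR2b, hsq], by linarith [hQ2b, hR2b, hsq]⟩
  refine htotal.trans (le_of_eq ?_)
  field_simp
  ring
end
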